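/- arXiv:2107.09569 — 2 statements merged into one kernel-verified Lean document; each statement's English description precedes it below -/
import Mathlib

section
/- Let λ be a nonempty partition and let γ_1, …, γ_m be its ⌐-shaped subgraphs (each γ_k consisting of the two edges {(x,y),(x+1,y)} and {(x+1,y),(x+1,y+1)} for some boxes of λ). For any choice of edges e_1, …, e_m with e_k an edge of γ_k, the graph obtained from the skeleton Σ_λ (the graph on all boxes of λ whose edges join adjacent boxes) by deleting the edges e_1, …, e_m is a spanning tree of Σ_λ (connected and acyclic on the box set of λ). -/
def skeleton (μ : YoungDiagram) : SimpleGraph {c : ℕ × ℕ // c ∈ μ.cells} :=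
  SimpleGraph.fromRel (fun a b =>
    (b : ℕ × ℕ) = ((a : ℕ × ℕ).1 + 1, (a : ℕ × ℕ).2) ∨
    (b : ℕ × ℕ) = ((a : ℕ × ℕ).1, (a : ℕ × ℕ).2 + 1))

/-- A ⌐-shaped subgraph, recorded by its corner box `p = (x,y)`: the boxes
`(x,y)`, `(x+1,y)`, `(x+1,y+1)` all lie in `μ`.  Its two edges are
`{(x,y),(x+1,y)}` and `{(x+1,y),(x+1,y+1)}`. -/
def IsLShape (μ : YoungDiagram) (p : ℕ × ℕ) : Prop :=
  p ∈ μ.cells ∧ (p.1 + 1, p.2) ∈ μ.cells ∧ (p.1 + 1, p.2 + 1) ∈ μ.cells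

/-- Given a choice function selecting one of the two edges of each ⌐-shaped
subgraph (`true` means the first edge `{(x,y),(x+1,y)}`, `false` the second
edge `{(x+1,y),(x+1,y+1)}`), the set of chosen (deleted) edges. -/
def deletedEdges (μ : YoungDiagram) (choice : ℕ × ℕ → Bool) :
    Set (Sym2 {c : ℕ × ℕ // c ∈ μ.cells}) :=
  { e | ∃ p : ℕ × ℕ, IsLShape μ p ∧
      ∃ a b : {c : ℕ × ℕ // c ∈ μ.cells}, e = s(a, b) ∧
        ((choice p = true ∧ (a : ℕ × ℕ) = p ∧ (b : ℕ × ℕ) = (p.1 + 1, p.2)) ∨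
         (choice p = false ∧ (a : ℕ × ℕ) = (p.1 + 1, p.2) ∧
            (b : ℕ × ℕ) = (p.1 + 1, p.2 + 1))) }

/-!
Boxes are `(x, y)` with `x` the row and `y` the column, as in `YoungDiagram`; let `ℓ` be the
length of the first row. Send every box to a *parent*: boxes of the first row point to their right
neighbour, and a box `(x, y)` of a lower row points to `(x, y + 1)` if that box exists and the edge
above `(x, y)` is the deleted one of its ⌐-shape, and to the box `(x - 1, y)` above it otherwise.
Only the root `(0, ℓ - 1)` has no parent. Each box is joined to its parent, which is smaller in the
lexicographic order on (row, ℓ - column), so every box is connected to the root; conversely every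
surviving edge joins a box to its parent, so there are at most `|λ| - 1` edges, and a connected
graph with that few edges is a tree.
-/

namespace SimpleGraph

variable {V α : Type*} {G : SimpleGraph V}

theorem reachable_of_parent [LT α] [WellFoundedLT α] {r : V} {f : V → V} (m : V → α)
    (hm : ∀ v ≠ r, m (f v) < m v) (hadj : ∀ v ≠ r, G.Adj v (f v)) (v : V) :
    G.Reachable v r := by
  induction v using (InvImage.wf m wellFounded_lt).induction with
  | _ v ih =>
    by_cases hv : v = r
    · exact hv ▸ .rfl
    · exact (hadj v hv).reachable.trans (ih _ (hm v hv))

theorem card_edgeSet_add_one_le_of_parent [Finite V] {r : V} {f : V → V} (hfr : f r = r)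
    (hpar : ∀ ⦃v w⦄, G.Adj v w → w = f v ∨ v = f w) :
    Nat.card G.edgeSet + 1 ≤ Nat.card V := by
  have hsub : G.edgeSet ⊆ (fun v ↦ s(v, f v)) '' {r}ᶜ := by
    rintro ⟨v, w⟩ (h : G.Adj v w)
    rcases hpar h with rfl | rfl
    · exact ⟨v, fun hv ↦ h.ne (by simp_all), rfl⟩
    · exact ⟨w, fun hw ↦ h.ne (by simp_all), Sym2.eq_swap⟩
  calc Nat.card G.edgeSet + 1 = G.edgeSet.ncard + 1 := rfl
    _ ≤ ({r}ᶜ : Set V).ncard + ({r} : Set V).ncard := by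
      rw [Set.ncard_singleton]
      gcongr
      exact (Set.ncard_le_ncard hsub).trans Set.ncard_image_le
    _ = Nat.card V := Set.ncard_compl_add_ncard _

theorem isTree_of_parent [Finite V] [LT α] [WellFoundedLT α] (r : V) (f : V → V) (m : V → α)
    (hfr : f r = r) (hm : ∀ v ≠ r, m (f v) < m v) (hadj : ∀ v ≠ r, G.Adj v (f v))
    (hpar : ∀ ⦃v w⦄, G.Adj v w → w = f v ∨ v = f w) : G.IsTree := by
  have hconn : G.Connected := by
    have : Nonempty V := ⟨r⟩
    exact (connected_iff_exists_forall_reachable G).2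
      ⟨r, fun v ↦ (reachable_of_parent m hm hadj v).symm⟩
  exact isTree_iff_connected_and_card.2 ⟨hconn,
    (card_edgeSet_add_one_le_of_parent hfr hpar).antisymm hconn.card_vert_le_card_edgeSet_add_one⟩

end SimpleGraph

theorem YoungDiagram.rowLen_zero_pos {μ : YoungDiagram} (hne : μ.cells.Nonempty) :
    0 < μ.rowLen 0 := by
  obtain ⟨⟨x, y⟩, h⟩ := hne
  exact μ.mem_iff_lt_rowLen.1 (μ.up_left_mem (Nat.zero_le x) (Nat.zero_le y) h)

section

open SimpleGraph

variable (μ : YoungDiagram) (choice : ℕ × ℕ → Bool)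

theorem mk_mem_deletedEdges_vertical_iff {x y : ℕ} (ha : (x, y) ∈ μ.cells)
    (hb : (x + 1, y) ∈ μ.cells) :
    s(⟨(x, y), ha⟩, ⟨(x + 1, y), hb⟩) ∈ deletedEdges μ choice ↔
      (x + 1, y + 1) ∈ μ.cells ∧ choice (x, y) = true := by
  constructor
  · rintro ⟨p, hp, a, b, he, h⟩
    rw [Sym2.eq_iff] at he
    grind [IsLShape]
  · rintro ⟨hc, hch⟩
    exact ⟨(x, y), ⟨ha, hb, hc⟩, _, _, rfl, .inl ⟨hch, rfl, rfl⟩⟩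

theorem mk_mem_deletedEdges_horizontal_iff {x y : ℕ} (ha : (x, y) ∈ μ.cells)
    (hb : (x, y + 1) ∈ μ.cells) :
    s(⟨(x, y), ha⟩, ⟨(x, y + 1), hb⟩) ∈ deletedEdges μ choice ↔
      x ≠ 0 ∧ choice (x - 1, y) = false := by
  constructor
  · rintro ⟨p, hp, a, b, he, h⟩
    rw [Sym2.eq_iff] at he
    grind [IsLShape]
  · rintro ⟨hx, hch⟩
    obtain ⟨x, rfl⟩ := Nat.exists_eq_succ_of_ne_zero hx
    have hp : (x, y) ∈ μ.cells := μ.up_left_mem (Nat.le_succ x) le_rfl ha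
    exact ⟨(x, y), ⟨hp, ha, hb⟩, _, _, rfl, .inr ⟨hch, rfl, rfl⟩⟩

theorem deleteEdges_adj_vertical_iff {x y : ℕ} (ha : (x, y) ∈ μ.cells)
    (hb : (x + 1, y) ∈ μ.cells) :
    ((skeleton μ).deleteEdges (deletedEdges μ choice)).Adj ⟨(x, y), ha⟩ ⟨(x + 1, y), hb⟩ ↔
      ¬((x + 1, y + 1) ∈ μ.cells ∧ choice (x, y) = true) := by
  rw [deleteEdges_adj, mk_mem_deletedEdges_vertical_iff]
  simp [skeleton]

theorem deleteEdges_adj_horizontal_iff {x y : ℕ} (ha : (x, y) ∈ μ.cells)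
    (hb : (x, y + 1) ∈ μ.cells) :
    ((skeleton μ).deleteEdges (deletedEdges μ choice)).Adj ⟨(x, y), ha⟩ ⟨(x, y + 1), hb⟩ ↔
      x = 0 ∨ choice (x - 1, y) = true := by
  rw [deleteEdges_adj, mk_mem_deletedEdges_horizontal_iff]
  simp [skeleton, or_iff_not_imp_left]

def treeParent : {c : ℕ × ℕ // c ∈ μ.cells} → {c : ℕ × ℕ // c ∈ μ.cells}
  | ⟨(x, y), hc⟩ =>
    if h : (x, y + 1) ∈ μ.cells ∧ (x = 0 ∨ choice (x - 1, y) = true) then ⟨(x, y + 1), h.1⟩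
    else ⟨(x - 1, y), μ.up_left_mem (Nat.sub_le x 1) le_rfl hc⟩

def treeRoot (hne : μ.cells.Nonempty) : {c : ℕ × ℕ // c ∈ μ.cells} :=
  ⟨(0, μ.rowLen 0 - 1), μ.mem_iff_lt_rowLen.2 (Nat.sub_lt (μ.rowLen_zero_pos hne) one_pos)⟩

def treeRank (c : {c : ℕ × ℕ // c ∈ μ.cells}) : ℕ ×ₗ ℕ := toLex (c.1.1, μ.rowLen 0 - c.1.2)

theorem treeParent_treeRoot (hne : μ.cells.Nonempty) :
    treeParent μ choice (treeRoot μ hne) = treeRoot μ hne := by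
  have := μ.rowLen_zero_pos hne
  simp [treeRoot, treeParent, YoungDiagram.mem_iff_lt_rowLen]
  omega

theorem fst_ne_zero_of_ne_treeRoot (hne : μ.cells.Nonempty) {x y : ℕ} {h : (x, y) ∈ μ.cells}
    (hv : ⟨(x, y), h⟩ ≠ treeRoot μ hne) (hy : x = 0 → (x, y + 1) ∉ μ.cells) : x ≠ 0 := by
  rintro rfl
  replace hy := hy rfl
  simp only [YoungDiagram.mem_cells, YoungDiagram.mem_iff_lt_rowLen] at h hy
  exact hv (Subtype.ext (Prod.ext rfl (show y = μ.rowLen 0 - 1 by omega)))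

theorem treeRank_treeParent_lt (hne : μ.cells.Nonempty) (v : {c : ℕ × ℕ // c ∈ μ.cells})
    (hv : v ≠ treeRoot μ hne) : treeRank μ (treeParent μ choice v) < treeRank μ v := by
  obtain ⟨⟨x, y⟩, h⟩ := v
  rw [treeParent]
  split_ifs with hA
  · have hy := μ.mem_iff_lt_rowLen.1 hA.1
    have := μ.rowLen_anti 0 x (Nat.zero_le x)
    exact Prod.Lex.toLex_lt_toLex.2 (.inr ⟨rfl, by dsimp only; omega⟩)
  · have := fst_ne_zero_of_ne_treeRoot μ hne hv fun hx hy ↦ hA ⟨hy, .inl hx⟩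
    exact Prod.Lex.toLex_lt_toLex.2 (.inl (by dsimp only; omega))

theorem adj_treeParent (hne : μ.cells.Nonempty) (v : {c : ℕ × ℕ // c ∈ μ.cells})
    (hv : v ≠ treeRoot μ hne) :
    ((skeleton μ).deleteEdges (deletedEdges μ choice)).Adj v (treeParent μ choice v) := by
  obtain ⟨⟨x, y⟩, h⟩ := v
  rw [treeParent]
  split_ifs with hA
  · exact (deleteEdges_adj_horizontal_iff μ choice h hA.1).2 hA.2
  · obtain ⟨x, rfl⟩ := Nat.exists_eq_succ_of_ne_zero
      (fst_ne_zero_of_ne_treeRoot μ hne hv fun hx hy ↦ hA ⟨hy, .inl hx⟩)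
    refine ((deleteEdges_adj_vertical_iff μ choice _ h).2 ?_).symm
    simpa using hA

theorem treeParent_eq_of_adj_vertical {x y : ℕ} {ha : (x, y) ∈ μ.cells} {hb : (x + 1, y) ∈ μ.cells}
    (h : ((skeleton μ).deleteEdges (deletedEdges μ choice)).Adj ⟨(x, y), ha⟩ ⟨(x + 1, y), hb⟩) :
    treeParent μ choice ⟨(x + 1, y), hb⟩ = ⟨(x, y), ha⟩ := by
  rw [deleteEdges_adj_vertical_iff] at h
  rw [treeParent, dif_neg (by simpa using h)]
  simp

theorem treeParent_eq_of_adj_horizontal {x y : ℕ} {ha : (x, y) ∈ μ.cells}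
    {hb : (x, y + 1) ∈ μ.cells}
    (h : ((skeleton μ).deleteEdges (deletedEdges μ choice)).Adj ⟨(x, y), ha⟩ ⟨(x, y + 1), hb⟩) :
    treeParent μ choice ⟨(x, y), ha⟩ = ⟨(x, y + 1), hb⟩ := by
  rw [deleteEdges_adj_horizontal_iff] at h
  rw [treeParent, dif_pos ⟨hb, h⟩]

theorem eq_treeParent_of_adj ⦃v w : {c : ℕ × ℕ // c ∈ μ.cells}⦄
    (h : ((skeleton μ).deleteEdges (deletedEdges μ choice)).Adj v w) :
    w = treeParent μ choice v ∨ v = treeParent μ choice w := by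
  obtain ⟨⟨x, y⟩, hv⟩ := v
  obtain ⟨⟨x', y'⟩, hw⟩ := w
  have hskel := (deleteEdges_adj.1 h).1
  simp only [skeleton, fromRel_adj, Prod.mk.injEq] at hskel
  obtain ⟨-, (⟨rfl, rfl⟩ | ⟨rfl, rfl⟩) | ⟨rfl, rfl⟩ | ⟨rfl, rfl⟩⟩ := hskel
  · exact .inr (treeParent_eq_of_adj_vertical μ choice h).symm
  · exact .inl (treeParent_eq_of_adj_horizontal μ choice h).symm
  · exact .inl (treeParent_eq_of_adj_vertical μ choice h.symm).symm
  · exact .inr (treeParent_eq_of_adj_horizontal μ choice h.symm).symm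

end

/-- for a nonempty partition `λ`, deleting from the skeleton
`Σ_λ` one chosen edge of each ⌐-shaped subgraph yields a spanning tree of
`Σ_λ` (a connected and acyclic graph on the box set of `λ`). -/
theorem deleteEdges_isTree (μ : YoungDiagram) (hne : μ.cells.Nonempty)
    (choice : ℕ × ℕ → Bool) :
    ((skeleton μ).deleteEdges (deletedEdges μ choice)).IsTree :=
  SimpleGraph.isTree_of_parent (treeRoot μ hne) (treeParent μ choice) (treeRank μ)
    (treeParent_treeRoot μ choice hne) (treeRank_treeParent_lt μ choice hne)
    (adj_treeParent μ choice hne) (eq_treeParent_of_adj μ choice)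
end

section
/- For a nonempty partition λ with n boxes, the number of edges of the skeleton Σ_λ equals (n − 1) + m, where m = Σ_i (m_i − 1) is the number of ⌐-shaped subgraphs of Σ_λ and m_i is the number of boxes of λ of content i. -/
/-- The edges of the skeleton `Σ_λ`, each recorded once as an ordered pair
`(a, b)` of boxes of `μ` with `b` the box directly to the right of or directly
above `a` (boxes differing by 1 in exactly one coordinate). -/
def skeletonEdges (μ : YoungDiagram) : Finset ((ℕ × ℕ) × (ℕ × ℕ)) :=
  (μ.cells ×ˢ μ.cells).filter
    (fun p => p.2 = (p.1.1 + 1, p.1.2) ∨ p.2 = (p.1.1, p.1.2 + 1))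

/-- The number of boxes of content `i` (content of box `(x,y)` is `x - y`). -/
def contentCount (μ : YoungDiagram) (i : ℤ) : ℕ :=
  (μ.cells.filter (fun c => (c.1 : ℤ) - (c.2 : ℤ) = i)).card

-- number of "vertical-end" boxes = colLen 0
lemma aux_rowEnd (μ : YoungDiagram) :
    (μ.cells.filter (fun a => (a.1, a.2 + 1) ∉ μ)).card = μ.colLen 0 := by
  rw [← Finset.card_range (μ.colLen 0)]
  apply Finset.card_bij (fun a _ => a.1)
  · rintro ⟨i, j⟩ ha
    simp only [Finset.mem_filter, YoungDiagram.mem_cells, YoungDiagram.mem_iff_lt_rowLen] at ha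
    simp only [Finset.mem_range, ← YoungDiagram.mem_iff_lt_colLen]
    exact μ.up_left_mem le_rfl (Nat.zero_le _) (YoungDiagram.mem_iff_lt_rowLen.2 ha.1)
  · rintro ⟨i, j⟩ ha ⟨i', j'⟩ hb h
    simp only [Finset.mem_filter, YoungDiagram.mem_cells, YoungDiagram.mem_iff_lt_rowLen] at ha hb
    simp only at h
    subst h
    have : j = j' := by omega
    simp [this]
  · intro i hi
    simp only [Finset.mem_range, ← YoungDiagram.mem_iff_lt_colLen] at hi
    have h0 : 0 < μ.rowLen i := YoungDiagram.mem_iff_lt_rowLen.1 hi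
    refine ⟨(i, μ.rowLen i - 1), ?_, rfl⟩
    simp only [Finset.mem_filter, YoungDiagram.mem_cells, YoungDiagram.mem_iff_lt_rowLen]
    omega

lemma aux_colEnd (μ : YoungDiagram) :
    (μ.cells.filter (fun a => (a.1 + 1, a.2) ∉ μ)).card = μ.rowLen 0 := by
  rw [← Finset.card_range (μ.rowLen 0)]
  apply Finset.card_bij (fun a _ => a.2)
  · rintro ⟨i, j⟩ ha
    simp only [Finset.mem_filter, YoungDiagram.mem_cells, YoungDiagram.mem_iff_lt_colLen] at ha
    simp only [Finset.mem_range, ← YoungDiagram.mem_iff_lt_rowLen]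
    exact μ.up_left_mem (Nat.zero_le _) le_rfl (YoungDiagram.mem_iff_lt_colLen.2 ha.1)
  · rintro ⟨i, j⟩ ha ⟨i', j'⟩ hb h
    simp only [Finset.mem_filter, YoungDiagram.mem_cells, YoungDiagram.mem_iff_lt_colLen] at ha hb
    simp only at h
    subst h
    have : i = i' := by omega
    simp [this]
  · intro j hj
    simp only [Finset.mem_range, ← YoungDiagram.mem_iff_lt_rowLen] at hj
    have h0 : 0 < μ.colLen j := YoungDiagram.mem_iff_lt_colLen.1 hj
    refine ⟨(μ.colLen j - 1, j), ?_, rfl⟩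
    simp only [Finset.mem_filter, YoungDiagram.mem_cells, YoungDiagram.mem_iff_lt_colLen]
    omega

lemma aux_edges (μ : YoungDiagram) :
    (skeletonEdges μ).card =
      (μ.cells.filter (fun a => (a.1 + 1, a.2) ∈ μ)).card +
      (μ.cells.filter (fun a => (a.1, a.2 + 1) ∈ μ)).card := by
  have himg : skeletonEdges μ =
      ((μ.cells.filter (fun a => (a.1 + 1, a.2) ∈ μ)).image (fun a => (a, (a.1 + 1, a.2)))) ∪
      ((μ.cells.filter (fun a => (a.1, a.2 + 1) ∈ μ)).image (fun a => (a, (a.1, a.2 + 1)))) := by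
    ext p
    constructor
    · intro hp
      simp only [skeletonEdges, Finset.mem_filter, Finset.mem_product] at hp
      obtain ⟨⟨ha, hb⟩, h | h⟩ := hp
      · apply Finset.mem_union_left
        refine Finset.mem_image.2 ⟨p.1, Finset.mem_filter.2 ⟨ha, ?_⟩, ?_⟩
        · rw [h] at hb; exact (YoungDiagram.mem_cells _).1 hb
        · exact Prod.ext rfl h.symm
      · apply Finset.mem_union_right
        refine Finset.mem_image.2 ⟨p.1, Finset.mem_filter.2 ⟨ha, ?_⟩, ?_⟩
        · rw [h] at hb; exact (YoungDiagram.mem_cells _).1 hb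
        · exact Prod.ext rfl h.symm
    · intro hp
      rcases Finset.mem_union.1 hp with h | h
      · obtain ⟨a, ha, rfl⟩ := Finset.mem_image.1 h
        obtain ⟨ha1, ha2⟩ := Finset.mem_filter.1 ha
        simp only [skeletonEdges, Finset.mem_filter, Finset.mem_product]
        refine ⟨⟨ha1, (YoungDiagram.mem_cells _).2 ha2⟩, ?_⟩
        simp
      · obtain ⟨a, ha, rfl⟩ := Finset.mem_image.1 h
        obtain ⟨ha1, ha2⟩ := Finset.mem_filter.1 ha
        simp only [skeletonEdges, Finset.mem_filter, Finset.mem_product]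
        refine ⟨⟨ha1, (YoungDiagram.mem_cells _).2 ha2⟩, ?_⟩
        simp
  rw [himg, Finset.card_union_of_disjoint, Finset.card_image_of_injective,
    Finset.card_image_of_injective]
  · intro a b h; exact (Prod.mk.injEq _ _ _ _ ▸ h).1
  · intro a b h; exact (Prod.mk.injEq _ _ _ _ ▸ h).1
  · rw [Finset.disjoint_left]
    rintro ⟨a, b⟩ h1 h2
    simp only [Finset.mem_image, Prod.mk.injEq] at h1 h2
    obtain ⟨c, _, rfl, rfl⟩ := h1
    obtain ⟨d, _, h3, h4⟩ := h2
    rw [Prod.ext_iff] at h3 h4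
    omega

lemma aux_contents (μ : YoungDiagram) (hne : μ.cells.Nonempty) :
    μ.cells.image (fun c => (c.1 : ℤ) - (c.2 : ℤ)) =
      Finset.Icc (1 - (μ.rowLen 0 : ℤ)) ((μ.colLen 0 : ℤ) - 1) := by
  ext i
  simp only [Finset.mem_image, YoungDiagram.mem_cells, Finset.mem_Icc]
  constructor
  · rintro ⟨⟨x, y⟩, hc, rfl⟩
    have h1 : x < μ.colLen 0 :=
      lt_of_lt_of_le (YoungDiagram.mem_iff_lt_colLen.1 hc) (μ.colLen_anti 0 y (Nat.zero_le _))
    have h2 : y < μ.rowLen 0 :=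
      lt_of_lt_of_le (YoungDiagram.mem_iff_lt_rowLen.1 hc) (μ.rowLen_anti 0 x (Nat.zero_le _))
    constructor <;> [skip; skip] <;> push_cast <;> omega
  · rintro ⟨h1, h2⟩
    rcases le_or_gt 0 i with h | h
    · refine ⟨(i.toNat, 0), YoungDiagram.mem_iff_lt_colLen.2 ?_, by omega⟩
      omega
    · refine ⟨(0, (-i).toNat), YoungDiagram.mem_iff_lt_rowLen.2 ?_, by omega⟩
      omega

/-- for a nonempty partition `λ` with `n` boxes, the number of
edges of the skeleton `Σ_λ` equals `(n - 1) + m`, where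
`m = Σ_i (m_i - 1)` (summed over the contents realized in `λ`) is the number
of ⌐-shaped subgraphs of `Σ_λ`. -/
theorem skeletonEdges_card (μ : YoungDiagram) (hne : μ.cells.Nonempty) :
    (skeletonEdges μ).card =
      (μ.cells.card - 1) +
        ∑ i ∈ μ.cells.image (fun c => (c.1 : ℤ) - (c.2 : ℤ)), (contentCount μ i - 1) := by
  obtain ⟨c0, hc0⟩ := hne
  have h00 : (0, 0) ∈ μ := μ.up_left_mem (Nat.zero_le _) (Nat.zero_le _) ((YoungDiagram.mem_cells _).1 hc0)
  have hr : 0 < μ.rowLen 0 := YoungDiagram.mem_iff_lt_rowLen.1 h00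
  have hc : 0 < μ.colLen 0 := YoungDiagram.mem_iff_lt_colLen.1 h00
  set n := μ.cells.card with hn
  set I := μ.cells.image (fun c => (c.1 : ℤ) - (c.2 : ℤ)) with hI
  -- card of I
  have hk : I.card = μ.colLen 0 + μ.rowLen 0 - 1 := by
    rw [hI, aux_contents μ ⟨c0, hc0⟩, Int.card_Icc]
    omega
  -- fiberwise sum
  have hsum : ∑ i ∈ I, contentCount μ i = n := by
    rw [hn, hI]
    exact (Finset.card_eq_sum_card_fiberwise (fun c hc =>
      Finset.mem_image_of_mem _ hc)).symm
  have hpos : ∀ i ∈ I, 1 ≤ contentCount μ i := by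
    intro i hi
    rw [hI] at hi
    obtain ⟨c, hc, rfl⟩ := Finset.mem_image.1 hi
    exact Finset.card_pos.2 ⟨c, Finset.mem_filter.2 ⟨hc, rfl⟩⟩
  have hsum2 : ∑ i ∈ I, (contentCount μ i - 1) = n - I.card := by
    have : ∑ i ∈ I, (contentCount μ i - 1) + ∑ i ∈ I, 1 = ∑ i ∈ I, contentCount μ i := by
      rw [← Finset.sum_add_distrib]
      exact Finset.sum_congr rfl (fun i hi => by have := hpos i hi; omega)
    simp only [Finset.sum_const, smul_eq_mul, mul_one] at this
    omega
  -- edge counts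
  have e1 : (μ.cells.filter (fun a => (a.1 + 1, a.2) ∈ μ)).card = n - μ.rowLen 0 ∧
      μ.rowLen 0 ≤ n := by
    have := Finset.card_filter_add_card_filter_not
      (s := μ.cells) (p := fun a => (a.1 + 1, a.2) ∈ μ)
    rw [aux_colEnd μ] at this
    omega
  have e2 : (μ.cells.filter (fun a => (a.1, a.2 + 1) ∈ μ)).card = n - μ.colLen 0 ∧
      μ.colLen 0 ≤ n := by
    have := Finset.card_filter_add_card_filter_not
      (s := μ.cells) (p := fun a => (a.1, a.2 + 1) ∈ μ)
    rw [aux_rowEnd μ] at this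
    omega
  have hkn : I.card ≤ n := by
    rw [hI, hn]; exact Finset.card_image_le
  rw [aux_edges μ, hsum2, e1.1, e2.1]
  have := e1.2; have := e2.2
  omega
end
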